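/- Let u, v : ℝ × ℝ → ℝ be smooth functions of (x,t). Then (u,v) solves the Hirota–Satsuma system if and only if for every λ ∈ ℂ the zero-curvature equation ∂_t L̃ − ∂_x Z̃ + L̃ Z̃ − Z̃ L̃ = 0 holds identically in (x,t), where L̃ and Z̃ are the 3×3 matrices L̃ = [[−u/3, −1, 0], [−v, 2u/3, −λ], [−1, 0, −u/3]] and Z̃ = (1/3)·[[v − u_x − u²/3, −u, 3λ], [2u_{xx} − 3v_x − uv + 3λ, 2u²/3 + v, −λu], [2u, 3, u_x − 2v − u²/3]]. -/

import Mathlib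

open Matrix

/-- Partial derivative in the first (space) variable. -/
noncomputable def pdx (f : ℝ → ℝ → ℝ) : ℝ → ℝ → ℝ := fun x t => deriv (fun x' => f x' t) x

/-- Partial derivative in the second (time) variable. -/
noncomputable def pdt (f : ℝ → ℝ → ℝ) : ℝ → ℝ → ℝ := fun x t => deriv (fun t' => f x t') t

/-- The Hirota–Satsuma system. -/
def HirotaSatsuma (u v : ℝ → ℝ → ℝ) : Prop :=
  ∀ x t : ℝ,
    pdt u x t = -(pdx (pdx u) x t) + (2/3) * u x t * pdx u x t + 2 * pdx v x t ∧
    pdt v x t = -(2/3) * pdx (pdx (pdx u)) x t + (2/3) * u x t * pdx (pdx u) x t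
      + (2/3) * pdx u x t * v x t - (2/3) * u x t * pdx v x t + pdx (pdx v) x t

/-- The spatial Lax matrix L̃ of the Hirota–Satsuma system. -/
noncomputable def Ltilde (u v : ℝ → ℝ → ℝ) (lam : ℂ) (x t : ℝ) : Matrix (Fin 3) (Fin 3) ℂ :=
  !![-(u x t : ℂ)/3, -1, 0;
     -(v x t : ℂ), 2*(u x t : ℂ)/3, -lam;
     -1, 0, -(u x t : ℂ)/3]

/-- The temporal Lax matrix Z̃ of the Hirota–Satsuma system. -/
noncomputable def Ztilde (u v : ℝ → ℝ → ℝ) (lam : ℂ) (x t : ℝ) : Matrix (Fin 3) (Fin 3) ℂ :=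
  (1/3 : ℂ) •
  !![(v x t : ℂ) - (pdx u x t : ℂ) - (u x t : ℂ)^2/3, -(u x t : ℂ), 3*lam;
     2*(pdx (pdx u) x t : ℂ) - 3*(pdx v x t : ℂ) - (u x t : ℂ)*(v x t : ℂ) + 3*lam,
       2*(u x t : ℂ)^2/3 + (v x t : ℂ), -lam*(u x t : ℂ);
     2*(u x t : ℂ), 3, (pdx u x t : ℂ) - 2*(v x t : ℂ) - (u x t : ℂ)^2/3]

private lemma hasDerivAt_fst' {f : ℝ → ℝ → ℝ}
    (hf : ContDiff ℝ (⊤ : ℕ∞) (fun p : ℝ × ℝ => f p.1 p.2)) (x t : ℝ) :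
    HasDerivAt (fun x' => f x' t) (pdx f x t) x := by
  have hc : HasDerivAt (fun x' : ℝ => ((x', t) : ℝ × ℝ)) ((1 : ℝ), (0 : ℝ)) x :=
    (hasDerivAt_id x).prodMk (hasDerivAt_const x t)
  have H := ((hf.differentiable (by simp) (x, t)).hasFDerivAt).comp_hasDerivAt x hc
  exact H.differentiableAt.hasDerivAt

private lemma hasDerivAt_snd' {f : ℝ → ℝ → ℝ}
    (hf : ContDiff ℝ (⊤ : ℕ∞) (fun p : ℝ × ℝ => f p.1 p.2)) (x t : ℝ) :
    HasDerivAt (fun t' => f x t') (pdt f x t) t := by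
  have hc : HasDerivAt (fun t' : ℝ => ((x, t') : ℝ × ℝ)) ((0 : ℝ), (1 : ℝ)) t :=
    (hasDerivAt_const t x).prodMk (hasDerivAt_id t)
  have H := ((hf.differentiable (by simp) (x, t)).hasFDerivAt).comp_hasDerivAt t hc
  exact H.differentiableAt.hasDerivAt

private lemma smooth_pdx' {f : ℝ → ℝ → ℝ}
    (hf : ContDiff ℝ (⊤ : ℕ∞) (fun p : ℝ × ℝ => f p.1 p.2)) :
    ContDiff ℝ (⊤ : ℕ∞) (fun p : ℝ × ℝ => pdx f p.1 p.2) := by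
  have h : (fun p : ℝ × ℝ => pdx f p.1 p.2)
      = fun p : ℝ × ℝ => fderiv ℝ (fun q : ℝ × ℝ => f q.1 q.2) p (1, 0) := by
    funext p
    have hc : HasDerivAt (fun x' : ℝ => ((x', p.2) : ℝ × ℝ)) ((1 : ℝ), (0 : ℝ)) p.1 :=
      (hasDerivAt_id p.1).prodMk (hasDerivAt_const p.1 p.2)
    have H := ((hf.differentiable (by simp) (p.1, p.2)).hasFDerivAt).comp_hasDerivAt p.1 hc
    exact H.deriv
  rw [h]
  exact (hf.fderiv_right (by simp)).clm_apply contDiff_const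

set_option maxHeartbeats 2000000 in
theorem hirotaSatsuma_iff_zero_curvature (u v : ℝ → ℝ → ℝ)
    (hu : ContDiff ℝ (⊤ : ℕ∞) (fun p : ℝ × ℝ => u p.1 p.2))
    (hv : ContDiff ℝ (⊤ : ℕ∞) (fun p : ℝ × ℝ => v p.1 p.2)) :
    HirotaSatsuma u v ↔
      ∀ lam : ℂ, ∀ x t : ℝ, ∀ i j : Fin 3,
        deriv (fun t' => Ltilde u v lam x t' i j) t
          - deriv (fun x' => Ztilde u v lam x' t i j) x
          + (Ltilde u v lam x t * Ztilde u v lam x t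
             - Ztilde u v lam x t * Ltilde u v lam x t) i j = 0 := by
  constructor
  · intro h lam x t i j
    obtain ⟨h1, h2⟩ := h x t
    have Du : HasDerivAt (fun x' => ((u x' t : ℝ) : ℂ)) ((pdx u x t : ℝ) : ℂ) x :=
      (hasDerivAt_fst' hu x t).ofReal_comp
    have Dv : HasDerivAt (fun x' => ((v x' t : ℝ) : ℂ)) ((pdx v x t : ℝ) : ℂ) x :=
      (hasDerivAt_fst' hv x t).ofReal_comp
    have Dux : HasDerivAt (fun x' => ((pdx u x' t : ℝ) : ℂ)) ((pdx (pdx u) x t : ℝ) : ℂ) x :=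
      (hasDerivAt_fst' (smooth_pdx' hu) x t).ofReal_comp
    have Duxx : HasDerivAt (fun x' => ((pdx (pdx u) x' t : ℝ) : ℂ))
        ((pdx (pdx (pdx u)) x t : ℝ) : ℂ) x :=
      (hasDerivAt_fst' (smooth_pdx' (smooth_pdx' hu)) x t).ofReal_comp
    have Dvx : HasDerivAt (fun x' => ((pdx v x' t : ℝ) : ℂ)) ((pdx (pdx v) x t : ℝ) : ℂ) x :=
      (hasDerivAt_fst' (smooth_pdx' hv) x t).ofReal_comp
    have Dut : HasDerivAt (fun t' => ((u x t' : ℝ) : ℂ)) ((pdt u x t : ℝ) : ℂ) t :=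
      (hasDerivAt_snd' hu x t).ofReal_comp
    have Dvt : HasDerivAt (fun t' => ((v x t' : ℝ) : ℂ)) ((pdt v x t : ℝ) : ℂ) t :=
      (hasDerivAt_snd' hv x t).ofReal_comp
    have Dusq : HasDerivAt (fun x' => ((u x' t : ℝ) : ℂ)^2)
        (((pdx u x t : ℝ) : ℂ) * ((u x t : ℝ) : ℂ) + ((u x t : ℝ) : ℂ) * ((pdx u x t : ℝ) : ℂ)) x := by
      simpa [pow_two, Pi.mul_def] using Du.mul Du
    have eut := Dut.deriv
    have evt := Dvt.deriv
    have eu := Du.deriv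
    have ev := Dv.deriv
    have e00 := ((Dv.sub Dux).sub (Dusq.div_const 3)).deriv
    have e10 := ((((Duxx.const_mul (2:ℂ)).sub (Dvx.const_mul (3:ℂ))).sub
      (Du.mul Dv)).add_const (3*lam)).deriv
    have e11 := (((Dusq.const_mul (2:ℂ)).div_const 3).add Dv).deriv
    have e22 := ((Dux.sub (Dv.const_mul (2:ℂ))).sub (Dusq.div_const 3)).deriv
    simp only [Pi.sub_def, Pi.add_def, Pi.mul_def] at e00 e10 e11 e22
    have h1' := congrArg (fun r : ℝ => (r : ℂ)) h1
    have h2' := congrArg (fun r : ℝ => (r : ℂ)) h2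
    push_cast at h1' h2'
    fin_cases i <;> fin_cases j <;>
      simp [Ltilde, Ztilde, Matrix.sub_apply, Matrix.mul_apply, Fin.sum_univ_three,
        Matrix.smul_apply, eut, evt, eu, ev, e00, e10, e11, e22]
    · linear_combination (-1/3 : ℂ) * h1'
    · ring
    · ring
    · linear_combination (-1 : ℂ) * h2'
    · linear_combination (2/3 : ℂ) * h1'
    · ring
    · ring
    · ring
    · linear_combination (-1/3 : ℂ) * h1'
  · intro h x t
    have Du : HasDerivAt (fun x' => ((u x' t : ℝ) : ℂ)) ((pdx u x t : ℝ) : ℂ) x :=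
      (hasDerivAt_fst' hu x t).ofReal_comp
    have Dv : HasDerivAt (fun x' => ((v x' t : ℝ) : ℂ)) ((pdx v x t : ℝ) : ℂ) x :=
      (hasDerivAt_fst' hv x t).ofReal_comp
    have Dux : HasDerivAt (fun x' => ((pdx u x' t : ℝ) : ℂ)) ((pdx (pdx u) x t : ℝ) : ℂ) x :=
      (hasDerivAt_fst' (smooth_pdx' hu) x t).ofReal_comp
    have Duxx : HasDerivAt (fun x' => ((pdx (pdx u) x' t : ℝ) : ℂ))
        ((pdx (pdx (pdx u)) x t : ℝ) : ℂ) x :=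
      (hasDerivAt_fst' (smooth_pdx' (smooth_pdx' hu)) x t).ofReal_comp
    have Dvx : HasDerivAt (fun x' => ((pdx v x' t : ℝ) : ℂ)) ((pdx (pdx v) x t : ℝ) : ℂ) x :=
      (hasDerivAt_fst' (smooth_pdx' hv) x t).ofReal_comp
    have Dut : HasDerivAt (fun t' => ((u x t' : ℝ) : ℂ)) ((pdt u x t : ℝ) : ℂ) t :=
      (hasDerivAt_snd' hu x t).ofReal_comp
    have Dvt : HasDerivAt (fun t' => ((v x t' : ℝ) : ℂ)) ((pdt v x t : ℝ) : ℂ) t :=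
      (hasDerivAt_snd' hv x t).ofReal_comp
    have Dusq : HasDerivAt (fun x' => ((u x' t : ℝ) : ℂ)^2)
        (((pdx u x t : ℝ) : ℂ) * ((u x t : ℝ) : ℂ) + ((u x t : ℝ) : ℂ) * ((pdx u x t : ℝ) : ℂ)) x := by
      simpa [pow_two, Pi.mul_def] using Du.mul Du
    have eut := Dut.deriv
    have evt := Dvt.deriv
    have e00 := ((Dv.sub Dux).sub (Dusq.div_const 3)).deriv
    have e10 := (((Duxx.const_mul (2:ℂ)).sub (Dvx.const_mul (3:ℂ))).sub
      (Du.mul Dv)).deriv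
    simp only [Pi.sub_def, Pi.add_def, Pi.mul_def] at e00 e10
    have e1 := h 0 x t 0 0
    have e2 := h 0 x t 1 0
    simp [Ltilde, Ztilde, Matrix.sub_apply, Matrix.mul_apply, Fin.sum_univ_three,
      Matrix.smul_apply, eut, evt, e00, e10] at e1 e2
    constructor
    · have key : ((pdt u x t + pdx (pdx u) x t - (2/3) * u x t * pdx u x t
          - 2 * pdx v x t : ℝ) : ℂ) = 0 := by
        push_cast
        linear_combination (-3 : ℂ) * e1
      have := Complex.ofReal_eq_zero.mp key
      linarith
    · have key : ((pdt v x t + (2/3) * pdx (pdx (pdx u)) x t - (2/3) * u x t * pdx (pdx u) x t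
          - (2/3) * pdx u x t * v x t + (2/3) * u x t * pdx v x t
          - pdx (pdx v) x t : ℝ) : ℂ) = 0 := by
        push_cast
        linear_combination (-1 : ℂ) * e2
      have := Complex.ofReal_eq_zero.mp key
      linarith
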